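/- Let N ≥ 1, α ∈ ℝ, R > 0, L > 0, and let U := { x ∈ (ℝ²)^N : |x_j − x_k| ≠ R for all j < k }. Suppose ψ : (ℝ²)^N → ℂ is smooth on U and satisfies Σ_{j=1}^N D_j² ψ = α W_R ψ pointwise on U, where D_j := −i∇_{x_j} + α A_j^R(x). Then for every real-valued smooth function Φ with compact support contained in U ∩ int(Q_L^N), where Q_L = [0,L]² is the square of side length L, setting Ψ := Φψ one has ∫ Σ_{j=1}^N |D_j Ψ|² dx = ∫ ( Σ_{j=1}^N |∇_{x_j} Φ|² + α W_R |Φ|² ) |ψ|² dx. -/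

import Mathlib

open MeasureTheory Finset
open scoped BigOperators ComplexConjugate

noncomputable section

/-- Configuration space of `N` particles in the plane. -/
abbrev Conf (N : ℕ) := Fin N → Fin 2 → ℝ

/-- Euclidean norm of a planar vector. -/
def nrm (v : Fin 2 → ℝ) : ℝ := Real.sqrt (v 0 ^ 2 + v 1 ^ 2)

/-- Counterclockwise 90°-rotation `x^⊥ = (-x₂, x₁)`. -/
def perp (v : Fin 2 → ℝ) : Fin 2 → ℝ := ![-(v 1), v 0]

/-- Complex coordinate `z = x₁ + i x₂` of a planar point. -/
def zC (v : Fin 2 → ℝ) : ℂ := (v 0 : ℂ) + (v 1 : ℂ) * Complex.I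

/-- Standard basis vector labelled `(j,i)` of the configuration space. -/
def evec {N : ℕ} (j : Fin N) (i : Fin 2) : Conf N :=
  fun j' i' => if j' = j ∧ i' = i then 1 else 0

/-- Partial derivative in the variable `(j,i)` of a complex-valued function. -/
def pd {N : ℕ} (j : Fin N) (i : Fin 2) (f : Conf N → ℂ) (x : Conf N) : ℂ :=
  fderiv ℝ f x (evec j i)

/-- Partial derivative in the variable `(j,i)` of a real-valued function. -/
def pdR {N : ℕ} (j : Fin N) (i : Fin 2) (f : Conf N → ℝ) (x : Conf N) : ℝ :=
  fderiv ℝ f x (evec j i)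

/-- Ideal anyon magnetic potential `A_j(x) = Σ_{k≠j} (x_j - x_k)^{-⊥}`. -/
def Avec {N : ℕ} (j : Fin N) (x : Conf N) : Fin 2 → ℝ :=
  ∑ k ∈ univ.filter (fun k => k ≠ j), (1 / nrm (x j - x k) ^ 2) • perp (x j - x k)

/-- Component `i` of the magnetically coupled momentum `D_j = -i∇_j + αA_j`. -/
def Dop {N : ℕ} (α : ℝ) (j : Fin N) (i : Fin 2) (f : Conf N → ℂ) (x : Conf N) : ℂ :=
  (-Complex.I) * pd j i f x + ((α * Avec j x i : ℝ) : ℂ) * f x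

/-- The magnetic Laplacian `D_j² = D_j · D_j`. -/
def D2 {N : ℕ} (α : ℝ) (j : Fin N) (f : Conf N → ℂ) (x : Conf N) : ℂ :=
  ∑ i : Fin 2, Dop α j i (fun y => Dop α j i f y) x

/-- The fat diagonal of the configuration space. -/
def fatDiag (N : ℕ) : Set (Conf N) := {x | ∃ j k, j ≠ k ∧ x j = x k}


/-- Regularized superpotential `w_R`. -/
def wR (R : ℝ) (v : Fin 2 → ℝ) : ℝ :=
  if R < nrm v then Real.log (nrm v) else Real.log R + (nrm v ^ 2 / R ^ 2 - 1) / 2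

/-- `R`-extended anyon magnetic potential `A_j^R(x) = Σ_{k≠j} (x_j-x_k)^⊥/|x_j-x_k|_R²`. -/
def AvecR {N : ℕ} (R : ℝ) (j : Fin N) (x : Conf N) : Fin 2 → ℝ :=
  ∑ k ∈ univ.filter (fun k => k ≠ j),
    (1 / max (nrm (x j - x k)) R ^ 2) • perp (x j - x k)

/-- Component `i` of the `R`-extended magnetically coupled momentum `D_j = -i∇_j + αA_j^R`. -/
def DopR {N : ℕ} (α R : ℝ) (j : Fin N) (i : Fin 2) (f : Conf N → ℂ) (x : Conf N) : ℂ :=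
  (-Complex.I) * pd j i f x + ((α * AvecR R j x i : ℝ) : ℂ) * f x

/-- The `R`-extended magnetic Laplacian `D_j² = D_j · D_j`. -/
def D2R {N : ℕ} (α R : ℝ) (j : Fin N) (f : Conf N → ℂ) (x : Conf N) : ℂ :=
  ∑ i : Fin 2, DopR α R j i (fun y => DopR α R j i f y) x

/-- `W_R(x) = Σ_{j≠k} (2/R²)·1_{|x_j-x_k|<R}`. -/
def WR {N : ℕ} (R : ℝ) (x : Conf N) : ℝ :=
  ∑ p ∈ univ.filter (fun p : Fin N × Fin N => p.1 ≠ p.2),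
    (2 / R ^ 2) * (if nrm (x p.1 - x p.2) < R then 1 else 0)


/-! ### Auxiliary lemmas -/

open scoped Topology

lemma normsq (z : ℂ) : ‖z‖^2 = z.re^2 + z.im^2 := by
  rw [Complex.sq_norm, Complex.normSq_apply]; ring

lemma hnsq (z : ℂ) : ‖z‖^2 = ((starRingEnd ℂ) z * z).re := by
  rw [normsq]; simp [Complex.mul_re]; ring

lemma nrm_sq (v : Fin 2 → ℝ) : nrm v ^ 2 = v 0 ^ 2 + v 1 ^ 2 :=
  Real.sq_sqrt (by positivity)

lemma nrm_neg (v : Fin 2 → ℝ) : nrm (-v) = nrm v := by simp [nrm]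

section PD

variable {N : ℕ} {j : Fin N} {i : Fin 2} {x : Conf N}

lemma pd_mul {f g : Conf N → ℂ} (hf : DifferentiableAt ℝ f x) (hg : DifferentiableAt ℝ g x) :
    pd j i (fun y => f y * g y) x = f x * pd j i g x + pd j i f x * g x := by
  unfold pd; rw [fderiv_fun_mul hf hg]; simp [smul_eq_mul, mul_comm]

lemma pd_add {f g : Conf N → ℂ} (hf : DifferentiableAt ℝ f x) (hg : DifferentiableAt ℝ g x) :
    pd j i (fun y => f y + g y) x = pd j i f x + pd j i g x := by
  unfold pd; rw [fderiv_fun_add hf hg]; simp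

lemma pd_ofReal {f : Conf N → ℝ} (hf : DifferentiableAt ℝ f x) :
    pd j i (fun y => ((f y : ℝ) : ℂ)) x = ((pdR j i f x : ℝ) : ℂ) := by
  unfold pd pdR
  have h : (fun y => ((f y : ℝ) : ℂ)) = (Complex.ofRealCLM : ℝ →L[ℝ] ℂ) ∘ f := rfl
  rw [h, fderiv_comp x Complex.ofRealCLM.differentiableAt hf]
  simp

lemma pd_conj {f : Conf N → ℂ} (hf : DifferentiableAt ℝ f x) :
    pd j i (fun y => (starRingEnd ℂ) (f y)) x = (starRingEnd ℂ) (pd j i f x) := by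
  unfold pd
  have h : (fun y => (starRingEnd ℂ) (f y)) = (Complex.conjCLE : ℂ ≃L[ℝ] ℂ) ∘ f := rfl
  rw [h, fderiv_comp x Complex.conjCLE.differentiableAt hf, ContinuousLinearEquiv.fderiv]
  simp

lemma pd_re {f : Conf N → ℂ} (hf : DifferentiableAt ℝ f x) :
    pdR j i (fun y => (f y).re) x = (pd j i f x).re := by
  unfold pd pdR
  have h : (fun y => (f y).re) = (Complex.reCLM : ℂ →L[ℝ] ℝ) ∘ f := rfl
  rw [h, fderiv_comp x Complex.reCLM.differentiableAt hf]
  simp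

lemma pdR_mul {f g : Conf N → ℝ} (hf : DifferentiableAt ℝ f x) (hg : DifferentiableAt ℝ g x) :
    pdR j i (fun y => f y * g y) x = f x * pdR j i g x + pdR j i f x * g x := by
  unfold pdR; rw [fderiv_fun_mul hf hg]; simp [smul_eq_mul, mul_comm]

lemma pdR_sub {f g : Conf N → ℝ} (hf : DifferentiableAt ℝ f x) (hg : DifferentiableAt ℝ g x) :
    pdR j i (fun y => f y - g y) x = pdR j i f x - pdR j i g x := by
  unfold pdR; rw [fderiv_fun_sub hf hg]; simp

lemma pd_const_mul {f : Conf N → ℂ} (c : ℂ) (hf : DifferentiableAt ℝ f x) :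
    pd j i (fun y => c * f y) x = c * pd j i f x := by
  unfold pd; rw [fderiv_const_mul hf]; simp

lemma pdR_const_mul {f : Conf N → ℝ} (c : ℝ) (hf : DifferentiableAt ℝ f x) :
    pdR j i (fun y => c * f y) x = c * pdR j i f x := by
  unfold pdR; rw [fderiv_const_mul hf]; simp

end PD

lemma contDiff_coord {N : ℕ} (j : Fin N) (l : Fin 2) :
    ContDiff ℝ (⊤ : ℕ∞) (fun y : Conf N => y j l) :=
  ((ContinuousLinearMap.proj (R := ℝ) (φ := fun _ : Fin 2 => ℝ) l).comp
    (ContinuousLinearMap.proj (R := ℝ) (φ := fun _ : Fin N => Fin 2 → ℝ) j)).contDiff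

lemma continuous_nrmpair {N : ℕ} (j k : Fin N) :
    Continuous (fun y : Conf N => nrm (y j - y k)) := by
  have h : (fun y : Conf N => nrm (y j - y k))
      = fun y => Real.sqrt ((y j 0 - y k 0) ^ 2 + (y j 1 - y k 1) ^ 2) := rfl
  rw [h]
  fun_prop

lemma contDiffAt_avec {N : ℕ} {R : ℝ} (hR : 0 < R) (j : Fin N) (i : Fin 2) (x : Conf N)
    (hx : ∀ k, k ≠ j → nrm (x j - x k) ≠ R) :
    ContDiffAt ℝ 1 (fun y => AvecR R j y i) x := by
  have hfun : (fun y => AvecR R j y i)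
      = fun y => ∑ k ∈ univ.filter (fun k => k ≠ j),
          (1 / max (nrm (y j - y k)) R ^ 2) * perp (y j - y k) i := by
    funext y; simp [AvecR, Finset.sum_apply]
  rw [hfun]
  apply ContDiffAt.sum
  intro k hk
  have hkj : k ≠ j := by simpa using hk
  have hperp : ContDiffAt ℝ 1 (fun y : Conf N => perp (y j - y k) i) x := by
    obtain rfl | rfl : i = 0 ∨ i = 1 := by omega
    · have h : (fun y : Conf N => perp (y j - y k) 0) = fun y => -(y j 1 - y k 1) := by
        funext y; simp [perp]
      rw [h]
      exact (((contDiff_coord j 1).sub (contDiff_coord k 1)).neg.of_le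
        (by simp)).contDiffAt
    · have h : (fun y : Conf N => perp (y j - y k) 1) = fun y => y j 0 - y k 0 := by
        funext y; simp [perp]
      rw [h]
      exact (((contDiff_coord j 0).sub (contDiff_coord k 0)).of_le
        (by simp)).contDiffAt
  apply ContDiffAt.mul _ hperp
  rcases lt_or_gt_of_ne (hx k hkj) with hlt | hgt
  · have hev : ∀ᶠ y in 𝓝 x, (1 : ℝ) / R ^ 2 = 1 / max (nrm (y j - y k)) R ^ 2 := by
      have hmem : {y : Conf N | nrm (y j - y k) < R} ∈ 𝓝 x :=
        (isOpen_lt (continuous_nrmpair j k) continuous_const).mem_nhds hlt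
      filter_upwards [hmem] with y hy
      rw [max_eq_right (le_of_lt hy)]
    exact contDiffAt_const.congr_of_eventuallyEq
      (by filter_upwards [hev] with y hy using hy.symm)
  · have hev : ∀ᶠ y in 𝓝 x,
        (1 : ℝ) / ((y j 0 - y k 0) ^ 2 + (y j 1 - y k 1) ^ 2)
          = 1 / max (nrm (y j - y k)) R ^ 2 := by
      have hmem : {y : Conf N | R < nrm (y j - y k)} ∈ 𝓝 x :=
        (isOpen_lt continuous_const (continuous_nrmpair j k)).mem_nhds hgt
      filter_upwards [hmem] with y hy
      rw [max_eq_left (le_of_lt hy), nrm_sq]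
      rfl
    have hq : ContDiffAt ℝ 1 (fun y : Conf N =>
        (1 : ℝ) / ((y j 0 - y k 0) ^ 2 + (y j 1 - y k 1) ^ 2)) x := by
      apply ContDiffAt.div contDiffAt_const
      · exact ((((contDiff_coord j 0).sub (contDiff_coord k 0)).pow 2).add
          (((contDiff_coord j 1).sub (contDiff_coord k 1)).pow 2)).contDiffAt.of_le
          (by simp)
      · have h1 : (x j 0 - x k 0) ^ 2 + (x j 1 - x k 1) ^ 2 = nrm (x j - x k) ^ 2 := by
          rw [nrm_sq]; rfl
        rw [h1]
        have h0 : 0 < nrm (x j - x k) := hR.trans hgt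
        positivity
    exact hq.congr_of_eventuallyEq (by filter_upwards [hev] with y hy using hy.symm)

lemma integral_fderiv_zero {N : ℕ} (f : Conf N → ℝ) (hf : ContDiff ℝ 1 f)
    (hc : HasCompactSupport f) (v : Conf N) : ∫ x, fderiv ℝ f x v = 0 := by
  obtain ⟨C, hC⟩ := hf.lipschitzWith_of_hasCompactSupport hc one_ne_zero
  have h := LipschitzWith.integral_lineDeriv_mul_eq (μ := volume)
      (LipschitzWith.const' (1 : ℝ) (K := 0)) hC hc (-v)
  have h1 : ∀ x : Conf N, lineDeriv ℝ (fun _ => (1:ℝ)) x (-v) = 0 := fun x =>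
    (differentiableAt_const _).lineDeriv_eq_fderiv.trans (by simp)
  have h2 : ∀ x : Conf N, lineDeriv ℝ f x (- -v) = fderiv ℝ f x v := fun x => by
    rw [neg_neg, (hf.differentiable one_ne_zero x).lineDeriv_eq_fderiv]
  simp only [h1, h2, zero_mul, integral_zero, mul_one] at h
  exact h.symm

lemma pointwise_key {N : ℕ} {j : Fin N} {i : Fin 2} {x : Conf N}
    (α R : ℝ) (Φ : Conf N → ℝ) (ψ : Conf N → ℂ)
    (hΦ : ContDiff ℝ 2 Φ)
    (hψx : ContDiffAt ℝ 2 ψ x)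
    (hψev : ∀ᶠ y in 𝓝 x, DifferentiableAt ℝ ψ y)
    (hAx : ContDiffAt ℝ 1 (fun y => AvecR R j y i) x) :
    ‖DopR α R j i (fun y => (Φ y : ℂ) * ψ y) x‖ ^ 2
      = (pdR j i Φ x) ^ 2 * ‖ψ x‖ ^ 2
        + pdR j i (fun y =>
            (Complex.I * (starRingEnd ℂ) ((Φ y : ℂ) * ψ y)
              * DopR α R j i (fun z => (Φ z : ℂ) * ψ z) y).re
            - Φ y * pdR j i Φ y * ‖ψ y‖ ^ 2) x
        + Φ x ^ 2 * ((starRingEnd ℂ) (ψ x)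
            * DopR α R j i (fun y => DopR α R j i ψ y) x).re := by
  have h2 : ((1 : WithTop ℕ∞) + 1 ≤ 2) := by norm_num
  have h12 : ((1 : WithTop ℕ∞) ≤ 2) := by norm_num
  have hΦC : ContDiff ℝ 2 (fun y : Conf N => ((Φ y : ℝ) : ℂ)) :=
    Complex.ofRealCLM.contDiff.comp hΦ
  have hΦd : ∀ y, DifferentiableAt ℝ Φ y := fun y => (hΦ.differentiable (by norm_num)).differentiableAt
  have hΦCd : ∀ y, DifferentiableAt ℝ (fun z : Conf N => ((Φ z : ℝ) : ℂ)) y :=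
    fun y => (hΦC.differentiable (by norm_num)).differentiableAt
  have hψd : DifferentiableAt ℝ ψ x := hψx.differentiableAt (by norm_num)
  have hΨx : ContDiffAt ℝ 2 (fun y => ((Φ y : ℝ) : ℂ) * ψ y) x := hΦC.contDiffAt.mul hψx
  have hΨd : DifferentiableAt ℝ (fun y => ((Φ y : ℝ) : ℂ) * ψ y) x := hΨx.differentiableAt (by norm_num)
  have hpdΨ : ContDiffAt ℝ 1 (fun y => pd j i (fun z => ((Φ z : ℝ) : ℂ) * ψ z) y) x :=
    (hΨx.fderiv_right h2).clm_apply contDiffAt_const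
  have hpdΨd : DifferentiableAt ℝ (fun y => pd j i (fun z => ((Φ z : ℝ) : ℂ) * ψ z) y) x :=
    hpdΨ.differentiableAt one_ne_zero
  have hpdψ : ContDiffAt ℝ 1 (fun y => pd j i ψ y) x :=
    (hψx.fderiv_right h2).clm_apply contDiffAt_const
  have hpdψd : DifferentiableAt ℝ (fun y => pd j i ψ y) x := hpdψ.differentiableAt one_ne_zero
  have hpdΦ : ContDiff ℝ 1 (fun y => pdR j i Φ y) :=
    (hΦ.fderiv_right h2).clm_apply contDiff_const
  have hpdΦd : DifferentiableAt ℝ (fun y => pdR j i Φ y) x :=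
    (hpdΦ.differentiable one_ne_zero).differentiableAt
  have hpdΦCd : DifferentiableAt ℝ (fun y => ((pdR j i Φ y : ℝ) : ℂ)) x :=
    Complex.ofRealCLM.differentiableAt.comp x hpdΦd
  have hAd : DifferentiableAt ℝ (fun y => AvecR R j y i) x := hAx.differentiableAt one_ne_zero
  have hAd' : DifferentiableAt ℝ (fun y => ((α * AvecR R j y i : ℝ) : ℂ)) x :=
    Complex.ofRealCLM.differentiableAt.comp x (hAd.const_mul α)
  have hcψ : DifferentiableAt ℝ (fun y => (starRingEnd ℂ) (ψ y)) x :=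
    Complex.conjCLE.differentiableAt.comp x hψd
  have hcΨ : DifferentiableAt ℝ (fun y => (starRingEnd ℂ) (((Φ y : ℝ) : ℂ) * ψ y)) x :=
    Complex.conjCLE.differentiableAt.comp x hΨd
  have hnrmψ_eq : (fun y => ‖ψ y‖^2) = fun y => ((starRingEnd ℂ) (ψ y) * ψ y).re :=
    funext fun y => hnsq (ψ y)
  have hnψd : DifferentiableAt ℝ (fun y => ‖ψ y‖^2) x := by
    rw [hnrmψ_eq]; exact Complex.reCLM.differentiableAt.comp x (hcψ.mul hψd)
  have E1 : pd j i (fun y => ((Φ y : ℝ) : ℂ) * ψ y) x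
      = ((Φ x : ℝ) : ℂ) * pd j i ψ x + ((pdR j i Φ x : ℝ) : ℂ) * ψ x := by
    rw [pd_mul (hΦCd x) hψd, pd_ofReal (hΦd x)]
  have E1' : (fun y => pd j i (fun z => ((Φ z : ℝ) : ℂ) * ψ z) y) =ᶠ[𝓝 x]
      (fun y => ((Φ y : ℝ) : ℂ) * pd j i ψ y + ((pdR j i Φ y : ℝ) : ℂ) * ψ y) := by
    filter_upwards [hψev] with y hy
    rw [pd_mul (hΦCd y) hy, pd_ofReal (hΦd y)]
  have E2 : pd j i (fun y => pd j i (fun z => ((Φ z : ℝ) : ℂ) * ψ z) y) x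
      = (((Φ x : ℝ) : ℂ) * pd j i (fun y => pd j i ψ y) x
          + ((pdR j i Φ x : ℝ) : ℂ) * pd j i ψ x)
        + (((pdR j i Φ x : ℝ) : ℂ) * pd j i ψ x
          + ((pdR j i (fun y => pdR j i Φ y) x : ℝ) : ℂ) * ψ x) := by
    have hstep : pd j i (fun y => pd j i (fun z => ((Φ z : ℝ) : ℂ) * ψ z) y) x
        = pd j i (fun y => ((Φ y : ℝ) : ℂ) * pd j i ψ y + ((pdR j i Φ y : ℝ) : ℂ) * ψ y) x := by
      show (fderiv ℝ (fun y => pd j i (fun z => ((Φ z : ℝ) : ℂ) * ψ z) y) x) (evec j i)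
          = (fderiv ℝ (fun y => ((Φ y : ℝ) : ℂ) * pd j i ψ y
              + ((pdR j i Φ y : ℝ) : ℂ) * ψ y) x) (evec j i)
      rw [E1'.fderiv_eq]
    rw [hstep, pd_add ((hΦCd x).fun_mul hpdψd) (hpdΦCd.fun_mul hψd),
      pd_mul (hΦCd x) hpdψd, pd_mul hpdΦCd hψd, pd_ofReal (hΦd x), pd_ofReal hpdΦd]
  have E4 : pd j i (fun y => -Complex.I * pd j i ψ y + ((α * AvecR R j y i : ℝ) : ℂ) * ψ y) x
      = -Complex.I * pd j i (fun y => pd j i ψ y) x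
        + (((α * AvecR R j x i : ℝ) : ℂ) * pd j i ψ x
          + ((α * pdR j i (fun y => AvecR R j y i) x : ℝ) : ℂ) * ψ x) := by
    rw [pd_add (hpdψd.const_mul _) (hAd'.fun_mul hψd), pd_const_mul _ hpdψd,
      pd_mul hAd' hψd, pd_ofReal (hAd.const_mul α), pdR_const_mul α hAd]
  have hDΨd : DifferentiableAt ℝ (fun y =>
      -Complex.I * pd j i (fun z => ((Φ z : ℝ) : ℂ) * ψ z) y
        + ((α * AvecR R j y i : ℝ) : ℂ) * (((Φ y : ℝ) : ℂ) * ψ y)) x :=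
    (hpdΨd.const_mul _).add (hAd'.mul hΨd)
  have E6 : pd j i (fun y =>
      -Complex.I * pd j i (fun z => ((Φ z : ℝ) : ℂ) * ψ z) y
        + ((α * AvecR R j y i : ℝ) : ℂ) * (((Φ y : ℝ) : ℂ) * ψ y)) x
      = -Complex.I * pd j i (fun y => pd j i (fun z => ((Φ z : ℝ) : ℂ) * ψ z) y) x
        + (((α * AvecR R j x i : ℝ) : ℂ) * pd j i (fun y => ((Φ y : ℝ) : ℂ) * ψ y) x
          + ((α * pdR j i (fun y => AvecR R j y i) x : ℝ) : ℂ)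
            * (((Φ x : ℝ) : ℂ) * ψ x)) := by
    rw [pd_add (hpdΨd.const_mul _) (hAd'.fun_mul hΨd), pd_const_mul _ hpdΨd,
      pd_mul hAd' hΨd, pd_ofReal (hAd.const_mul α), pdR_const_mul α hAd]
  have EN : pdR j i (fun y => ‖ψ y‖ ^ 2) x
      = ((starRingEnd ℂ) (ψ x) * pd j i ψ x + (starRingEnd ℂ) (pd j i ψ x) * ψ x).re := by
    rw [hnrmψ_eq, pd_re (hcψ.fun_mul hψd), pd_mul hcψ hψd, pd_conj hψd]
  have hGd : DifferentiableAt ℝ (fun y =>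
      (Complex.I * (starRingEnd ℂ) (((Φ y : ℝ) : ℂ) * ψ y)
        * (-Complex.I * pd j i (fun z => ((Φ z : ℝ) : ℂ) * ψ z) y
            + ((α * AvecR R j y i : ℝ) : ℂ) * (((Φ y : ℝ) : ℂ) * ψ y))).re) x :=
    Complex.reCLM.differentiableAt.comp x ((hcΨ.const_mul Complex.I).mul hDΨd)
  have hPd : DifferentiableAt ℝ (fun y => Φ y * pdR j i Φ y * ‖ψ y‖ ^ 2) x :=
    ((hΦd x).mul hpdΦd).mul hnψd
  simp only [DopR]
  rw [pdR_sub hGd hPd]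
  rw [pd_re ((hcΨ.const_mul Complex.I).fun_mul hDΨd)]
  rw [pd_mul (hcΨ.const_mul Complex.I) hDΨd]
  rw [pd_const_mul Complex.I hcΨ, pd_conj hΨd]
  rw [pdR_mul ((hΦd x).fun_mul hpdΦd) hnψd, pdR_mul (hΦd x) hpdΦd]
  rw [EN, E6, E4, E2, E1]
  simp only [normsq, Complex.mul_re, Complex.mul_im, Complex.add_re, Complex.add_im,
    Complex.neg_re, Complex.neg_im, Complex.I_re, Complex.I_im, Complex.ofReal_re,
    Complex.ofReal_im, Complex.conj_re, Complex.conj_im]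
  ring

/-- If `ψ` solves `Σ_j D_j² ψ = α W_R ψ` away from the circles
`|x_j - x_k| = R`, then for real smooth `Φ` compactly supported in this set and in the
interior of the box `Q_L^N`, the kinetic energy of `Ψ = Φψ` on `Q_L^N` equals
`∫ (|∇Φ|² + αW_R|Φ|²)|ψ|²`. -/
theorem statement3 (N : ℕ) (hN : 1 ≤ N) (α R L : ℝ) (hR : 0 < R) (hL : 0 < L)
    (U : Set (Conf N))
    (hU : U = {x : Conf N | ∀ j k : Fin N, j < k → nrm (x j - x k) ≠ R})
    (ψ : Conf N → ℂ) (hψ : ContDiffOn ℝ (⊤ : ℕ∞) ψ U)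
    (heq : ∀ x ∈ U, ∑ j, D2R α R j ψ x = ((α * WR R x : ℝ) : ℂ) * ψ x)
    (Φ : Conf N → ℝ) (hΦ : ContDiff ℝ (⊤ : ℕ∞) Φ) (hcpt : HasCompactSupport Φ)
    (hsupp : tsupport Φ ⊆
      U ∩ interior {x : Conf N | ∀ j i, x j i ∈ Set.Icc (0 : ℝ) L}) :
    ∫ x in {x : Conf N | ∀ j i, x j i ∈ Set.Icc (0 : ℝ) L},
        ∑ j, ∑ i, ‖DopR α R j i (fun y => (Φ y : ℂ) * ψ y) x‖ ^ 2
      = ∫ x in {x : Conf N | ∀ j i, x j i ∈ Set.Icc (0 : ℝ) L},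
          (∑ j, ∑ i, (pdR j i Φ x) ^ 2 + α * WR R x * Φ x ^ 2) * ‖ψ x‖ ^ 2 := by
  classical
  -- The box and preliminary set facts
  set B : Set (Conf N) := {x : Conf N | ∀ j i, x j i ∈ Set.Icc (0 : ℝ) L} with hBdef
  have hUopen : IsOpen U := by
    rw [hU]
    have hre : {x : Conf N | ∀ j k : Fin N, j < k → nrm (x j - x k) ≠ R}
        = ⋂ p : Fin N × Fin N, {x : Conf N | p.1 < p.2 → nrm (x p.1 - x p.2) ≠ R} := by
      ext y; simp [Set.mem_iInter]
    rw [hre]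
    refine isOpen_iInter_of_finite fun p => ?_
    by_cases hp : p.1 < p.2
    · have h : {x : Conf N | p.1 < p.2 → nrm (x p.1 - x p.2) ≠ R}
          = (fun x : Conf N => nrm (x p.1 - x p.2)) ⁻¹' {R}ᶜ := by
        ext y; simp [hp]
      rw [h]
      exact isOpen_compl_singleton.preimage (continuous_nrmpair p.1 p.2)
    · have h : {x : Conf N | p.1 < p.2 → nrm (x p.1 - x p.2) ≠ R} = Set.univ := by
        ext y; simp [hp]
      rw [h]; exact isOpen_univ
  have hUnrm : ∀ x ∈ U, ∀ (j k : Fin N), k ≠ j → nrm (x j - x k) ≠ R := by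
    intro x hx j k hkj
    rw [hU] at hx
    rcases lt_or_gt_of_ne (Ne.symm hkj) with h | h
    · exact hx j k h
    · have h2 := hx k j h
      rwa [show x j - x k = -(x k - x j) by abel, nrm_neg]
  have hsubU : tsupport Φ ⊆ U := fun y hy => (hsupp hy).1
  have hsubB : tsupport Φ ⊆ B := fun y hy => interior_subset (hsupp hy).2
  have hoffev : ∀ x, x ∉ tsupport Φ → Φ =ᶠ[𝓝 x] (fun _ => (0:ℝ)) := by
    intro x hx
    filter_upwards [(isClosed_tsupport Φ).isOpen_compl.mem_nhds hx] with y hy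
    exact image_eq_zero_of_notMem_tsupport hy
  have hΦ0 : ∀ x ∉ tsupport Φ, Φ x = 0 := fun x hx => image_eq_zero_of_notMem_tsupport hx
  have hpdΦ0 : ∀ (j : Fin N) (i : Fin 2), ∀ x ∉ tsupport Φ, pdR j i Φ x = 0 := by
    intro j i x hx
    unfold pdR
    rw [(hoffev x hx).fderiv_eq]
    simp
  have hΨev0 : ∀ x, x ∉ tsupport Φ →
      (fun y => (Φ y : ℂ) * ψ y) =ᶠ[𝓝 x] (fun _ => (0:ℂ)) := by
    intro x hx; filter_upwards [hoffev x hx] with y hy; simp [hy]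
  have hΨ0 : ∀ x ∉ tsupport Φ, (Φ x : ℂ) * ψ x = 0 := by
    intro x hx; simp [hΦ0 x hx]
  have hpdΨ0 : ∀ (j : Fin N) (i : Fin 2), ∀ x ∉ tsupport Φ,
      pd j i (fun y => (Φ y : ℂ) * ψ y) x = 0 := by
    intro j i x hx
    unfold pd
    rw [(hΨev0 x hx).fderiv_eq]
    simp
  have hDop0 : ∀ (j : Fin N) (i : Fin 2), ∀ x ∉ tsupport Φ,
      DopR α R j i (fun y => (Φ y : ℂ) * ψ y) x = 0 := by
    intro j i x hx
    simp only [DopR]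
    rw [hpdΨ0 j i x hx, hΨ0 x hx]
    simp
  -- smoothness facts
  have h2' : ((1 : WithTop ℕ∞) + 1 ≤ 2) := by norm_num
  have h12 : ((1 : WithTop ℕ∞) ≤ 2) := by norm_num
  have hΦ2 : ContDiff ℝ 2 Φ := hΦ.of_le (WithTop.coe_le_coe.2 le_top)
  have hψat : ∀ x ∈ U, ContDiffAt ℝ 2 ψ x :=
    fun x hx => (hψ.contDiffAt (hUopen.mem_nhds hx)).of_le (WithTop.coe_le_coe.2 le_top)
  have hψev : ∀ x ∈ U, ∀ᶠ y in 𝓝 x, DifferentiableAt ℝ ψ y := by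
    intro x hx
    filter_upwards [hUopen.mem_nhds hx] with y hy
    exact (hψat y hy).differentiableAt (by norm_num)
  have hAat : ∀ x ∈ U, ∀ (j : Fin N) (i : Fin 2),
      ContDiffAt ℝ 1 (fun y => AvecR R j y i) x :=
    fun x hx j i => contDiffAt_avec hR j i x (fun k hk => hUnrm x hx j k hk)
  -- the auxiliary vector fields F j i
  set F : Fin N → Fin 2 → Conf N → ℝ := fun j i y =>
    (Complex.I * (starRingEnd ℂ) ((Φ y : ℂ) * ψ y)
      * DopR α R j i (fun z => (Φ z : ℂ) * ψ z) y).re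
    - Φ y * pdR j i Φ y * ‖ψ y‖ ^ 2 with hFdef
  have hF0 : ∀ (j : Fin N) (i : Fin 2), ∀ x ∉ tsupport Φ, F j i x = 0 := by
    intro j i x hx
    simp only [hFdef]
    rw [hΨ0 x hx, hΦ0 x hx]
    simp
  have hFC : ∀ (j : Fin N) (i : Fin 2), ContDiff ℝ 1 (F j i) := by
    intro j i
    rw [contDiff_iff_contDiffAt]
    intro x
    by_cases hx : x ∈ tsupport Φ
    · have hxU := hsubU hx
      have hψx := hψat x hxU
      have hAx := hAat x hxU j i
      have hΦC : ContDiff ℝ 2 (fun y : Conf N => ((Φ y : ℝ) : ℂ)) :=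
        Complex.ofRealCLM.contDiff.comp hΦ2
      have hΨx : ContDiffAt ℝ 2 (fun y => ((Φ y : ℝ) : ℂ) * ψ y) x := hΦC.contDiffAt.mul hψx
      have hΨx1 : ContDiffAt ℝ 1 (fun y => ((Φ y : ℝ) : ℂ) * ψ y) x := hΨx.of_le h12
      have hpdΨ : ContDiffAt ℝ 1 (fun y => pd j i (fun z => ((Φ z : ℝ) : ℂ) * ψ z) y) x :=
        (hΨx.fderiv_right h2').clm_apply contDiffAt_const
      have hconjΨ : ContDiffAt ℝ 1 (fun y => (starRingEnd ℂ) (((Φ y : ℝ) : ℂ) * ψ y)) x :=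
        Complex.conjCLE.contDiff.contDiffAt.comp x hΨx1
      have hA' : ContDiffAt ℝ 1 (fun y => ((α * AvecR R j y i : ℝ) : ℂ)) x :=
        Complex.ofRealCLM.contDiff.contDiffAt.comp x (contDiffAt_const.mul hAx)
      have hDΨat : ContDiffAt ℝ 1 (fun y =>
          -Complex.I * pd j i (fun z => ((Φ z : ℝ) : ℂ) * ψ z) y
            + ((α * AvecR R j y i : ℝ) : ℂ) * (((Φ y : ℝ) : ℂ) * ψ y)) x :=
        (contDiffAt_const.mul hpdΨ).add (hA'.mul hΨx1)
      have hG : ContDiffAt ℝ 1 (fun y =>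
          (Complex.I * (starRingEnd ℂ) (((Φ y : ℝ) : ℂ) * ψ y)
            * (-Complex.I * pd j i (fun z => ((Φ z : ℝ) : ℂ) * ψ z) y
                + ((α * AvecR R j y i : ℝ) : ℂ) * (((Φ y : ℝ) : ℂ) * ψ y))).re) x :=
        Complex.reCLM.contDiff.contDiffAt.comp x
          ((contDiffAt_const.mul hconjΨ).mul hDΨat)
      have hpdΦc : ContDiff ℝ 1 (fun y => pdR j i Φ y) :=
        (hΦ2.fderiv_right h2').clm_apply contDiff_const
      have hψ1 : ContDiffAt ℝ 1 ψ x := hψx.of_le h12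
      have hconjψ : ContDiffAt ℝ 1 (fun y => (starRingEnd ℂ) (ψ y)) x :=
        Complex.conjCLE.contDiff.contDiffAt.comp x hψ1
      have hnrmψ : ContDiffAt ℝ 1 (fun y => ‖ψ y‖ ^ 2) x := by
        have heqn : (fun y : Conf N => ‖ψ y‖^2)
            = fun y => ((starRingEnd ℂ) (ψ y) * ψ y).re := funext fun y => hnsq (ψ y)
        rw [heqn]
        exact Complex.reCLM.contDiff.contDiffAt.comp x (hconjψ.mul hψ1)
      have hP : ContDiffAt ℝ 1 (fun y => Φ y * pdR j i Φ y * ‖ψ y‖ ^ 2) x :=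
        (((hΦ2.of_le h12).contDiffAt.mul hpdΦc.contDiffAt).mul hnrmψ)
      exact hG.sub hP
    · exact contDiffAt_const.congr_of_eventuallyEq
        (by filter_upwards [(isClosed_tsupport Φ).isOpen_compl.mem_nhds hx] with y hy
            using hF0 j i y hy)
  have hFsupp : ∀ (j : Fin N) (i : Fin 2), HasCompactSupport (F j i) :=
    fun j i => HasCompactSupport.intro hcpt (hF0 j i)
  have hpdF0 : ∀ (j : Fin N) (i : Fin 2), ∀ x ∉ tsupport Φ, pdR j i (F j i) x = 0 := by
    intro j i x hx
    have hev : F j i =ᶠ[𝓝 x] (fun _ => (0:ℝ)) := by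
      filter_upwards [(isClosed_tsupport Φ).isOpen_compl.mem_nhds hx] with y hy
      exact hF0 j i y hy
    unfold pdR
    rw [hev.fderiv_eq]
    simp
  have hdiv : ∀ (j : Fin N) (i : Fin 2), ∫ x, pdR j i (F j i) x = 0 :=
    fun j i => integral_fderiv_zero (F j i) (hFC j i) (hFsupp j i) (evec j i)
  -- the pointwise identity
  have hpt : ∀ x : Conf N,
      ∑ j, ∑ i, ‖DopR α R j i (fun y => (Φ y : ℂ) * ψ y) x‖ ^ 2
        = (∑ j, ∑ i, (pdR j i Φ x) ^ 2 + α * WR R x * Φ x ^ 2) * ‖ψ x‖ ^ 2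
          + ∑ j, ∑ i, pdR j i (F j i) x := by
    intro x
    by_cases hx : x ∈ U
    · have hkey : ∀ (j : Fin N) (i : Fin 2),
          ‖DopR α R j i (fun y => (Φ y : ℂ) * ψ y) x‖ ^ 2
            = (pdR j i Φ x) ^ 2 * ‖ψ x‖ ^ 2 + pdR j i (F j i) x
              + Φ x ^ 2 * ((starRingEnd ℂ) (ψ x)
                  * DopR α R j i (fun y => DopR α R j i ψ y) x).re := by
        intro j i
        exact pointwise_key α R Φ ψ hΦ2 (hψat x hx) (hψev x hx) (hAat x hx j i)
      calc ∑ j, ∑ i, ‖DopR α R j i (fun y => (Φ y : ℂ) * ψ y) x‖ ^ 2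
          = ∑ j, ∑ i, ((pdR j i Φ x) ^ 2 * ‖ψ x‖ ^ 2 + pdR j i (F j i) x
              + Φ x ^ 2 * ((starRingEnd ℂ) (ψ x)
                  * DopR α R j i (fun y => DopR α R j i ψ y) x).re) := by
            exact Finset.sum_congr rfl fun j _ => Finset.sum_congr rfl fun i _ => hkey j i
        _ = (∑ j, ∑ i, (pdR j i Φ x) ^ 2) * ‖ψ x‖ ^ 2 + (∑ j, ∑ i, pdR j i (F j i) x)
              + Φ x ^ 2 * ((starRingEnd ℂ) (ψ x)
                  * ∑ j, ∑ i, DopR α R j i (fun y => DopR α R j i ψ y) x).re := by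
            simp only [Finset.sum_add_distrib, Finset.sum_mul, Finset.mul_sum,
              Complex.re_sum]
        _ = (∑ j, ∑ i, (pdR j i Φ x) ^ 2 + α * WR R x * Φ x ^ 2) * ‖ψ x‖ ^ 2
              + ∑ j, ∑ i, pdR j i (F j i) x := by
            have hsum : (∑ j, ∑ i, DopR α R j i (fun y => DopR α R j i ψ y) x)
                = ∑ j, D2R α R j ψ x := Finset.sum_congr rfl fun j _ => rfl
            rw [hsum, heq x hx]
            have hre : ((starRingEnd ℂ) (ψ x) * (((α * WR R x : ℝ) : ℂ) * ψ x)).re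
                = α * WR R x * ‖ψ x‖ ^ 2 := by
              rw [hnsq]
              simp [Complex.mul_re, Complex.mul_im, Complex.conj_re, Complex.conj_im]
              ring
            rw [hre]
            ring
    · have hxs : x ∉ tsupport Φ := fun h => hx (hsubU h)
      have hz1 : ∀ (j : Fin N) (i : Fin 2),
          ‖DopR α R j i (fun y => (Φ y : ℂ) * ψ y) x‖ ^ 2 = 0 := by
        intro j i; rw [hDop0 j i x hxs]; simp
      have hz2 : ∀ (j : Fin N) (i : Fin 2), pdR j i Φ x = 0 := fun j i => hpdΦ0 j i x hxs
      have hz3 : ∀ (j : Fin N) (i : Fin 2), pdR j i (F j i) x = 0 := fun j i => hpdF0 j i x hxs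
      have hz0 : ∀ (j : Fin N) (i : Fin 2),
          DopR α R j i (fun y => (Φ y : ℂ) * ψ y) x = 0 := fun j i => hDop0 j i x hxs
      simp [hz0, hz2, hz3, hΦ0 x hxs]
  -- integrability facts
  have hpdFint : ∀ (j : Fin N) (i : Fin 2), Integrable (fun x => pdR j i (F j i) x) := by
    intro j i
    have hc : Continuous (fun x => pdR j i (F j i) x) :=
      ((hFC j i).continuous_fderiv one_ne_zero).clm_apply continuous_const
    exact hc.integrable_of_hasCompactSupport
      (HasCompactSupport.intro hcpt (fun x hx => hpdF0 j i x hx))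
  have hDivint : Integrable (fun x => ∑ j, ∑ i, pdR j i (F j i) x) :=
    integrable_finset_sum _ (fun j _ => integrable_finset_sum _ (fun i _ => hpdFint j i))
  have hWloc : ∀ x ∈ U, (fun y => WR R y) =ᶠ[𝓝 x] (fun _ => WR R x) := by
    intro x hx
    have hall : ∀ᶠ y in 𝓝 x, ∀ p ∈ univ.filter (fun p : Fin N × Fin N => p.1 ≠ p.2),
        (if nrm (y p.1 - y p.2) < R then (1:ℝ) else 0)
          = (if nrm (x p.1 - x p.2) < R then (1:ℝ) else 0) := by
      rw [Filter.eventually_all_finset]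
      intro p hp
      have hp' : p.1 ≠ p.2 := by simpa using hp
      have hne : nrm (x p.1 - x p.2) ≠ R := hUnrm x hx p.1 p.2 (Ne.symm hp')
      rcases lt_or_gt_of_ne hne with h | h
      · filter_upwards [(isOpen_lt (continuous_nrmpair p.1 p.2) continuous_const).mem_nhds h]
          with y hy
        rw [if_pos hy, if_pos h]
      · filter_upwards [(isOpen_lt continuous_const (continuous_nrmpair p.1 p.2)).mem_nhds h]
          with y hy
        rw [if_neg (not_lt.2 (le_of_lt hy)), if_neg (not_lt.2 (le_of_lt h))]
    filter_upwards [hall] with y hy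
    exact Finset.sum_congr rfl fun p hp => by rw [hy p hp]
  have hRHS0 : ∀ x ∉ tsupport Φ,
      (∑ j, ∑ i, pdR j i Φ x ^ 2 + α * WR R x * Φ x ^ 2) * ‖ψ x‖ ^ 2 = 0 := by
    intro x hx
    have hz2 : ∀ (j : Fin N) (i : Fin 2), pdR j i Φ x = 0 := fun j i => hpdΦ0 j i x hx
    simp [hz2, hΦ0 x hx]
  have hRHScont : Continuous (fun x =>
      (∑ j, ∑ i, pdR j i Φ x ^ 2 + α * WR R x * Φ x ^ 2) * ‖ψ x‖ ^ 2) := by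
    have hsum : Continuous (fun y : Conf N => ∑ j, ∑ i, pdR j i Φ y ^ 2) :=
      continuous_finset_sum _ fun j _ => continuous_finset_sum _ fun i _ =>
        (((hΦ2.fderiv_right h2').clm_apply contDiff_const).continuous (n := 1)).pow 2
    rw [continuous_iff_continuousAt]
    intro x
    by_cases hx : x ∈ U
    · have hW : ContinuousAt (fun y => WR R y) x :=
        continuousAt_const.congr (hWloc x hx).symm
      have hψc : ContinuousAt (fun y => ‖ψ y‖ ^ 2) x :=
        (((hψat x hx).continuousAt).norm).pow 2
      exact ((hsum.continuousAt.add ((continuousAt_const.mul hW).mul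
        ((hΦ2.continuous.continuousAt).pow 2))).mul hψc)
    · have hxs : x ∉ tsupport Φ := fun h => hx (hsubU h)
      have hev : (fun _ : Conf N => (0:ℝ)) =ᶠ[𝓝 x] (fun x =>
          (∑ j, ∑ i, pdR j i Φ x ^ 2 + α * WR R x * Φ x ^ 2) * ‖ψ x‖ ^ 2) := by
        filter_upwards [(isClosed_tsupport Φ).isOpen_compl.mem_nhds hxs] with y hy
        exact (hRHS0 y hy).symm
      exact continuousAt_const.congr hev
  have hRHSint : Integrable (fun x =>
      (∑ j, ∑ i, pdR j i Φ x ^ 2 + α * WR R x * Φ x ^ 2) * ‖ψ x‖ ^ 2) :=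
    hRHScont.integrable_of_hasCompactSupport (HasCompactSupport.intro hcpt hRHS0)
  have hdivtotal : ∫ x, ∑ j, ∑ i, pdR j i (F j i) x = 0 := by
    rw [integral_finset_sum _ (fun j _ => integrable_finset_sum _ (fun i _ => hpdFint j i))]
    refine Finset.sum_eq_zero fun j _ => ?_
    rw [integral_finset_sum _ (fun i _ => hpdFint j i)]
    exact Finset.sum_eq_zero fun i _ => hdiv j i
  have hLHS0B : ∀ x ∉ B,
      (∑ j, ∑ i, ‖DopR α R j i (fun y => (Φ y : ℂ) * ψ y) x‖ ^ 2) = 0 := by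
    intro x hx
    have hxs : x ∉ tsupport Φ := fun h => hx (hsubB h)
    have hz0 : ∀ (j : Fin N) (i : Fin 2),
        DopR α R j i (fun y => (Φ y : ℂ) * ψ y) x = 0 := fun j i => hDop0 j i x hxs
    simp [hz0]
  have hRHS0B : ∀ x ∉ B,
      (∑ j, ∑ i, pdR j i Φ x ^ 2 + α * WR R x * Φ x ^ 2) * ‖ψ x‖ ^ 2 = 0 :=
    fun x hx => hRHS0 x (fun h => hx (hsubB h))
  calc ∫ x in B, ∑ j, ∑ i, ‖DopR α R j i (fun y => (Φ y : ℂ) * ψ y) x‖ ^ 2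
      = ∫ x, ∑ j, ∑ i, ‖DopR α R j i (fun y => (Φ y : ℂ) * ψ y) x‖ ^ 2 :=
        setIntegral_eq_integral_of_forall_compl_eq_zero hLHS0B
    _ = ∫ x, ((∑ j, ∑ i, pdR j i Φ x ^ 2 + α * WR R x * Φ x ^ 2) * ‖ψ x‖ ^ 2
          + ∑ j, ∑ i, pdR j i (F j i) x) :=
        integral_congr_ae (Filter.Eventually.of_forall hpt)
    _ = (∫ x, (∑ j, ∑ i, pdR j i Φ x ^ 2 + α * WR R x * Φ x ^ 2) * ‖ψ x‖ ^ 2)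
          + ∫ x, ∑ j, ∑ i, pdR j i (F j i) x := integral_add hRHSint hDivint
    _ = ∫ x, (∑ j, ∑ i, pdR j i Φ x ^ 2 + α * WR R x * Φ x ^ 2) * ‖ψ x‖ ^ 2 := by
        rw [hdivtotal, add_zero]
    _ = ∫ x in B, (∑ j, ∑ i, pdR j i Φ x ^ 2 + α * WR R x * Φ x ^ 2) * ‖ψ x‖ ^ 2 :=
        (setIntegral_eq_integral_of_forall_compl_eq_zero hRHS0B).symm
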